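/- A graph G is 2-γ'_SMB-critical if and only if G is isomorphic to G_n' for some n ≥ 1. -/

import Mathlib

/-!
Maker–Breaker domination game.  The players Dominator and Staller alternately select
previously unselected vertices of a graph `G`.  Dominator wins if at some point his selected
vertices form a dominating set of `G`; Staller wins if she selects all vertices of the closed
neighbourhood of some vertex.  Below, `D` always denotes the set of vertices selected by
Dominator so far and `S` the set selected by Staller.
-/

namespace MBD

variable {V : Type*}

/-- `D` is a dominating set of `G`. -/
def IsDomSet (G : SimpleGraph V) (D : Set V) : Prop :=
  ∀ v, v ∈ D ∨ ∃ u ∈ D, G.Adj u v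

/-- Dominator is to move.  `DWin G k D S` says that Dominator has a strategy guaranteeing
that his selected set becomes a dominating set of `G` after at most `k` further moves of his
(the game ends when all vertices have been selected). -/
def DWin (G : SimpleGraph V) : ℕ → Set V → Set V → Prop
  | 0, D, _ => IsDomSet G D
  | (k+1), D, S => IsDomSet G D ∨
      ∃ v ∉ D ∪ S,
        (IsDomSet G (insert v D) ∨
          ((∃ w, w ∉ insert v D ∪ S) ∧
            ∀ w ∉ insert v D ∪ S, DWin G k (insert v D) (insert w S)))

/-- Staller is to move, and Dominator can win using at most `k` further moves of his. -/
def DWinS (G : SimpleGraph V) (k : ℕ) (D S : Set V) : Prop :=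
  IsDomSet G D ∨
    ((∃ w, w ∉ D ∪ S) ∧ ∀ w ∉ D ∪ S, DWin G k D (insert w S))

/-- The Maker–Breaker domination number `γ_MB` of `G`: the least `k` such that Dominator,
moving first (D-game), can win within at most `k` of his moves; `∞` if he cannot win. -/
noncomputable def gammaMB (G : SimpleGraph V) : ℕ∞ :=
  sInf (Nat.cast '' {k : ℕ | DWin G k ∅ ∅})

/-- The Maker–Breaker domination number `γ'_MB` of `G`: the least `k` such that Dominator
can win within at most `k` of his moves in the S-game (Staller moves first); `∞` if he
cannot win. -/
noncomputable def gammaMB' (G : SimpleGraph V) : ℕ∞ :=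
  sInf (Nat.cast '' {k : ℕ | DWinS G k ∅ ∅})

/-- Staller has won: she has selected all vertices of the closed neighbourhood `N[v]`
of some vertex `v`. -/
def IsStallerWin (G : SimpleGraph V) (S : Set V) : Prop :=
  ∃ v, v ∈ S ∧ ∀ u, G.Adj v u → u ∈ S

/-- Staller is to move.  `SWin G k D S` says Staller has a strategy to win using at most `k`
further moves of hers. -/
def SWin (G : SimpleGraph V) : ℕ → Set V → Set V → Prop
  | 0, _, S => IsStallerWin G S
  | (k+1), D, S => IsStallerWin G S ∨
      ∃ v ∉ D ∪ S,
        (IsStallerWin G (insert v S) ∨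
          ((∃ w, w ∉ D ∪ insert v S) ∧
            ∀ w ∉ D ∪ insert v S, SWin G k (insert w D) (insert v S)))

/-- Dominator is to move, and Staller can win within at most `k` further moves of hers. -/
def SWinD (G : SimpleGraph V) (k : ℕ) (D S : Set V) : Prop :=
  IsStallerWin G S ∨
    ((∃ w, w ∉ D ∪ S) ∧ ∀ w ∉ D ∪ S, SWin G k (insert w D) S)

/-- The Staller-Maker–Breaker domination number `γ_SMB` of `G`: the least `k` such that
Staller can win within at most `k` of her moves in the D-game (Dominator starts);
`∞` if she cannot win. -/
noncomputable def gammaSMB (G : SimpleGraph V) : ℕ∞ :=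
  sInf (Nat.cast '' {k : ℕ | SWinD G k ∅ ∅})

/-- The Staller-Maker–Breaker domination number `γ'_SMB` of `G`: the least `k` such that
Staller can win within at most `k` of her moves in the S-game (Staller starts);
`∞` if she cannot win. -/
noncomputable def gammaSMB' (G : SimpleGraph V) : ℕ∞ :=
  sInf (Nat.cast '' {k : ℕ | SWin G k ∅ ∅})

end MBD

open MBD

/-- The graph `G_n'`: the complete graph `K_n` (on `Fin n`, whose vertex `0` gets the pendants)
with exactly two pendant vertices attached to the single vertex `0`. -/
def GnPrime (n : ℕ) : SimpleGraph (Fin n ⊕ Fin 2) :=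
  SimpleGraph.fromRel (fun a b =>
    match a, b with
    | Sum.inl _, Sum.inl _ => True
    | Sum.inl i, Sum.inr _ => i.val = 0
    | _, _ => False)

/-!
Staller wins the S-game within two moves iff `G` has an isolated vertex or two pendant vertices
`p₁, p₂` with a common neighbour `v`: she opens with `v`, creating the two threats `{p₁, v}` and
`{p₂, v}`, of which Dominator can block only one. So `γ'_SMB(G) = 2` iff `G` has no isolated
vertex but has such a pendant pair, and `γ'_SMB(G + e) > 2` iff `G + e` has none.

Adding an edge outside `{p₁, p₂}` keeps the pendant pair, so criticality forces `V ∖ {p₁, p₂}`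
to be a clique, i.e. `G ≅ G_n'`. Conversely, a pendant pair of `G_n' + uw` is a pendant pair of
`G_n'` avoiding `u` and `w`, and the complement of every pendant pair of `G_n'` is a clique,
so `u` and `w` were already adjacent.
-/

namespace SimpleGraph

variable {V W : Type*} {G : SimpleGraph V} {G' : SimpleGraph W} {u w x c p q v p₁ p₂ q₁ q₂ : V}

def IsPendantPair (G : SimpleGraph V) (v p₁ p₂ : V) : Prop :=
  p₁ ≠ p₂ ∧ G.neighborSet p₁ = {v} ∧ G.neighborSet p₂ = {v}

def HasPendantPair (G : SimpleGraph V) : Prop :=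
  ∃ v p₁ p₂, G.IsPendantPair v p₁ p₂

def IsCliqueWithPendantPair (G : SimpleGraph V) (v p₁ p₂ : V) : Prop :=
  G.IsPendantPair v p₁ p₂ ∧ G.IsClique {p₁, p₂}ᶜ

lemma adj_iff_of_neighborSet_eq (h : G.neighborSet p = {v}) : G.Adj p u ↔ u = v := by
  rw [← mem_neighborSet, h, Set.mem_singleton_iff]

lemma neighborSet_sup_edge_of_ne (hu : p ≠ u) (hw : p ≠ w) :
    (G ⊔ edge u w).neighborSet p = G.neighborSet p := by
  ext x
  simp [edge_adj, hu, hw]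

lemma IsPendantPair.sup_edge (h : G.IsPendantPair v p₁ p₂) (hu : u ∉ ({p₁, p₂} : Set V))
    (hw : w ∉ ({p₁, p₂} : Set V)) : (G ⊔ edge u w).IsPendantPair v p₁ p₂ := by
  simp only [Set.mem_insert_iff, Set.mem_singleton_iff, not_or] at hu hw
  obtain ⟨hne, h₁, h₂⟩ := h
  refine ⟨hne, ?_, ?_⟩
  · rw [neighborSet_sup_edge_of_ne (Ne.symm hu.1) (Ne.symm hw.1), h₁]
  · rw [neighborSet_sup_edge_of_ne (Ne.symm hu.2) (Ne.symm hw.2), h₂]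

lemma neighborSet_eq_of_sup_edge (hp : ¬ G.IsIsolated p) (hne : u ≠ w) (huw : ¬ G.Adj u w)
    (h : (G ⊔ edge u w).neighborSet p = {c}) : G.neighborSet p = {c} ∧ p ≠ u ∧ p ≠ w := by
  have hG : G.neighborSet p = {c} :=
    (G.neighborSet_nonempty.mpr hp).subset_singleton_iff.mp (h ▸ Set.subset_union_left)
  have hedge : ∀ y, (edge u w).Adj p y → y = c := fun y hy =>
    (adj_iff_of_neighborSet_eq h).mp (Or.inr hy)
  refine ⟨hG, ?_, ?_⟩
  · rintro rfl
    have := hedge w ((edge_adj _ _ _ _).mpr ⟨Or.inl ⟨rfl, rfl⟩, hne⟩)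
    exact huw ((adj_iff_of_neighborSet_eq hG).mpr this)
  · rintro rfl
    have := hedge u ((edge_adj _ _ _ _).mpr ⟨Or.inr ⟨rfl, rfl⟩, hne.symm⟩)
    exact huw ((adj_iff_of_neighborSet_eq hG).mpr this).symm

lemma IsPendantPair.of_sup_edge (hG : ∀ x, ¬ G.IsIsolated x) (hne : u ≠ w) (huw : ¬ G.Adj u w)
    (h : (G ⊔ edge u w).IsPendantPair c q₁ q₂) :
    G.IsPendantPair c q₁ q₂ ∧ u ∉ ({q₁, q₂} : Set V) ∧ w ∉ ({q₁, q₂} : Set V) := by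
  obtain ⟨hq, h₁, h₂⟩ := h
  obtain ⟨h₁, hu₁, hw₁⟩ := neighborSet_eq_of_sup_edge (hG q₁) hne huw h₁
  obtain ⟨h₂, hu₂, hw₂⟩ := neighborSet_eq_of_sup_edge (hG q₂) hne huw h₂
  simp only [Set.mem_insert_iff, Set.mem_singleton_iff, not_or]
  exact ⟨⟨hq, h₁, h₂⟩, ⟨Ne.symm hu₁, Ne.symm hu₂⟩, ⟨Ne.symm hw₁, Ne.symm hw₂⟩⟩

namespace IsCliqueWithPendantPair

lemma adj_left (hG : G.IsCliqueWithPendantPair v p₁ p₂) : G.Adj p₁ v :=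
  (adj_iff_of_neighborSet_eq hG.1.2.1).mpr rfl

lemma adj_right (hG : G.IsCliqueWithPendantPair v p₁ p₂) : G.Adj p₂ v :=
  (adj_iff_of_neighborSet_eq hG.1.2.2).mpr rfl

lemma adj_iff (hG : G.IsCliqueWithPendantPair v p₁ p₂) {a b : V} : G.Adj a b ↔
    a ≠ b ∧ (a ∈ ({p₁, p₂} : Set V) → b = v) ∧ (b ∈ ({p₁, p₂} : Set V) → a = v) := by
  obtain ⟨⟨-, h₁, h₂⟩, hK⟩ := hG
  have hP : ∀ {x y}, x ∈ ({p₁, p₂} : Set V) → (G.Adj x y ↔ y = v) := by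
    rintro x y (rfl | rfl)
    exacts [adj_iff_of_neighborSet_eq h₁, adj_iff_of_neighborSet_eq h₂]
  refine ⟨fun h => ⟨h.ne, fun ha => (hP ha).mp h, fun hb => (hP hb).mp h.symm⟩, ?_⟩
  rintro ⟨hab, ha, hb⟩
  by_cases ha' : a ∈ ({p₁, p₂} : Set V)
  · exact (hP ha').mpr (ha ha')
  by_cases hb' : b ∈ ({p₁, p₂} : Set V)
  · exact ((hP hb').mpr (hb hb')).symm
  exact hK ha' hb' hab

lemma adj_of_ne (hG : G.IsCliqueWithPendantPair v p₁ p₂) (hx : x ≠ v) : G.Adj x v := by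
  refine hG.adj_iff.mpr ⟨hx, fun _ => rfl, ?_⟩
  rintro (h | h)
  exacts [absurd h hG.adj_left.ne.symm, absurd h hG.adj_right.ne.symm]

lemma not_isIsolated (hG : G.IsCliqueWithPendantPair v p₁ p₂) (x : V) : ¬ G.IsIsolated x := by
  intro hx
  by_cases hxv : x = v
  · exact hx p₁ (hxv ▸ hG.adj_left.symm)
  · exact hx v (hG.adj_of_ne hxv)

lemma ne_of_neighborSet_eq (hG : G.IsCliqueWithPendantPair v p₁ p₂)
    (hq : G.neighborSet q = {c}) : q ≠ v := by
  rintro rfl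
  exact hG.1.1 (((adj_iff_of_neighborSet_eq hq).mp hG.adj_left.symm).trans
    ((adj_iff_of_neighborSet_eq hq).mp hG.adj_right.symm).symm)

/-- A third pendant vertex `q` exists only for `n = 2`, where `q` is the other clique vertex. -/
lemma eq_of_neighborSet_eq (hG : G.IsCliqueWithPendantPair v p₁ p₂)
    (hq : G.neighborSet q = {c}) (hq₁ : q ≠ p₁) (hq₂ : q ≠ p₂) (x : V) :
    x = p₁ ∨ x = p₂ ∨ x = q ∨ x = v := by
  have hvc : v = c := (adj_iff_of_neighborSet_eq hq).mp (hG.adj_of_ne (hG.ne_of_neighborSet_eq hq))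
  by_contra! hx
  have hqx : G.Adj q x :=
    hG.2 (by simp [hq₁, hq₂]) (by simp [hx.1, hx.2.1]) (Ne.symm hx.2.2.1)
  exact hx.2.2.2 (((adj_iff_of_neighborSet_eq hq).mp hqx).trans hvc.symm)

/-- If `q₁, q₂ ∈ {p₁, p₂}` then `{q₁, q₂} = {p₁, p₂}` contains `a`; otherwise one of them is a
third pendant vertex and `eq_of_neighborSet_eq` pins down every vertex. -/
lemma eq_of_mem_of_notMem (hG : G.IsCliqueWithPendantPair v p₁ p₂)
    (hq : G.IsPendantPair c q₁ q₂) {a b : V} (ha : a ∈ ({p₁, p₂} : Set V))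
    (haq : a ∉ ({q₁, q₂} : Set V)) (hbq : b ∉ ({q₁, q₂} : Set V)) (hab : a ≠ b) : b = v := by
  obtain ⟨hq, h₁, h₂⟩ := hq
  simp only [Set.mem_insert_iff, Set.mem_singleton_iff, not_or] at ha haq hbq
  have := hG.ne_of_neighborSet_eq h₁
  have := hG.ne_of_neighborSet_eq h₂
  have := (hG.eq_of_neighborSet_eq h₁ · · b)
  have := (hG.eq_of_neighborSet_eq h₁ · · q₂)
  have := (hG.eq_of_neighborSet_eq h₂ · · b)
  by_cases q₁ = p₁ <;> by_cases q₁ = p₂ <;> by_cases q₂ = p₁ <;> by_cases q₂ = p₂ <;> grind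

lemma isClique_compl (hG : G.IsCliqueWithPendantPair v p₁ p₂) (hq : G.IsPendantPair c q₁ q₂) :
    G.IsClique {q₁, q₂}ᶜ := fun _ ha _ hb hab =>
  hG.adj_iff.mpr ⟨hab, fun ha' => hG.eq_of_mem_of_notMem hq ha' ha hb hab,
    fun hb' => hG.eq_of_mem_of_notMem hq hb' hb ha (Ne.symm hab)⟩

lemma not_hasPendantPair_sup_edge (hG : G.IsCliqueWithPendantPair v p₁ p₂) (hne : u ≠ w)
    (huw : ¬ G.Adj u w) : ¬ (G ⊔ edge u w).HasPendantPair := by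
  rintro ⟨c, q₁, q₂, hq⟩
  obtain ⟨hq, hu, hw⟩ := hq.of_sup_edge hG.not_isIsolated hne huw
  exact huw (hG.isClique_compl hq hu hw hne)

lemma comap (φ : G ≃g G') {v' p₁' p₂' : W} (h : G'.IsCliqueWithPendantPair v' p₁' p₂') :
    G.IsCliqueWithPendantPair (φ.symm v') (φ.symm p₁') (φ.symm p₂') := by
  obtain ⟨⟨hne, h₁, h₂⟩, hK⟩ := h
  have hN : ∀ {p}, G'.neighborSet p = {v'} → G.neighborSet (φ.symm p) = {φ.symm v'} := by
    intro p hp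
    ext x
    rw [← φ.apply_mem_neighborSet_iff, φ.apply_symm_apply, hp, Set.mem_singleton_iff,
      Set.mem_singleton_iff]
    exact ⟨fun h => by simp [← h], fun h => by simp [h]⟩
  refine ⟨⟨by simpa using hne, hN h₁, hN h₂⟩, fun a ha b hb hab => ?_⟩
  have hmem : ∀ {x}, x ∈ ({φ.symm p₁', φ.symm p₂'} : Set V)ᶜ → φ x ∈ ({p₁', p₂'} : Set W)ᶜ := by
    intro x hx
    simp only [Set.mem_compl_iff, Set.mem_insert_iff, Set.mem_singleton_iff, not_or] at hx ⊢
    exact ⟨fun h => hx.1 (by rw [← h, φ.symm_apply_apply]),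
      fun h => hx.2 (by rw [← h, φ.symm_apply_apply])⟩
  exact φ.map_adj_iff.mp (hK (hmem ha) (hmem hb) (φ.injective.ne hab))

/-- The adjacency of a clique with two pendant vertices is determined by `v` and `{p₁, p₂}`. -/
def iso {v' p₁' p₂' : W} (hG : G.IsCliqueWithPendantPair v p₁ p₂)
    (hG' : G'.IsCliqueWithPendantPair v' p₁' p₂') (e : V ≃ W) (hv : e v = v')
    (hP : ∀ x, e x ∈ ({p₁', p₂'} : Set W) ↔ x ∈ ({p₁, p₂} : Set V)) : G ≃g G' where
  toEquiv := e
  map_rel_iff' := by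
    intro a b
    simp only [hG.adj_iff, hG'.adj_iff, hP, ← hv, e.apply_eq_iff_eq, ne_eq]

end IsCliqueWithPendantPair

end SimpleGraph

open SimpleGraph

lemma isCliqueWithPendantPair_gnPrime {n : ℕ} (hn : 0 < n) :
    (GnPrime n).IsCliqueWithPendantPair (.inl ⟨0, hn⟩) (.inr 0) (.inr 1) := by
  have hN : ∀ j, (GnPrime n).neighborSet (.inr j) = {.inl ⟨0, hn⟩} := by
    intro j
    ext (i | i) <;> simp [GnPrime, Fin.ext_iff]
  refine ⟨⟨by simp, hN 0, hN 1⟩, ?_⟩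
  rintro (i | i) hi (j | j) hj hij
  · simpa [GnPrime] using hij
  all_goals simp only [Set.mem_compl_iff, Set.mem_insert_iff, Set.mem_singleton_iff,
    Sum.inr.injEq, reduceCtorEq, or_false] at hi hj
  all_goals omega

lemma SimpleGraph.IsCliqueWithPendantPair.exists_iso_gnPrime {V : Type*} [Finite V]
    {G : SimpleGraph V} {v p₁ p₂ : V} (hG : G.IsCliqueWithPendantPair v p₁ p₂) :
    ∃ n, 1 ≤ n ∧ Nonempty (G ≃g GnPrime n) := by
  classical
  set K : Set V := {p₁, p₂}ᶜ
  have hvK : v ∈ K := by simp [K, hG.adj_left.ne.symm, hG.adj_right.ne.symm]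
  have hn : 0 < Nat.card K := Nat.card_pos_iff.mpr ⟨⟨⟨v, hvK⟩⟩, inferInstance⟩
  have hK₂ : Nat.card ↥Kᶜ = 2 := by
    rw [compl_compl, Nat.card_coe_set_eq, Set.ncard_pair hG.1.1]
  let e₁ : K ≃ Fin (Nat.card K) :=
    (Finite.equivFin K).trans (Equiv.swap (Finite.equivFin K ⟨v, hvK⟩) ⟨0, hn⟩)
  let e : V ≃ Fin (Nat.card K) ⊕ Fin 2 :=
    (Equiv.Set.sumCompl K).symm.trans (Equiv.sumCongr e₁ (Finite.equivFinOfCardEq hK₂))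
  refine ⟨_, hn, ⟨hG.iso (isCliqueWithPendantPair_gnPrime hn) e ?_ fun x => ?_⟩⟩
  · simp only [e, e₁, Equiv.trans_apply, Equiv.Set.sumCompl_symm_apply_of_mem hvK,
      Equiv.sumCongr_apply, Sum.map_inl, Equiv.swap_apply_left]
  · by_cases hx : x ∈ K
    · simp only [e, Equiv.trans_apply, Equiv.Set.sumCompl_symm_apply_of_mem hx,
        Equiv.sumCongr_apply, Sum.map_inl, Set.mem_insert_iff, Set.mem_singleton_iff,
        reduceCtorEq, or_false, false_iff]
      simpa [K] using hx
    · simp only [e, Equiv.trans_apply, Equiv.Set.sumCompl_symm_apply_of_notMem hx,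
        Equiv.sumCongr_apply, Sum.map_inr]
      simp only [K, Set.mem_compl_iff, not_not] at hx
      refine iff_of_true ?_ hx
      simp only [Set.mem_insert_iff, Set.mem_singleton_iff, Sum.inr.injEq]
      omega

namespace MBD

variable {V : Type*} {G : SimpleGraph V} {D S : Set V} {v y : V}

lemma not_isStallerWin_empty : ¬ IsStallerWin G ∅ := fun ⟨_, h, _⟩ => h

lemma isStallerWin_singleton : IsStallerWin G {v} ↔ G.IsIsolated v := by
  refine ⟨?_, fun h => ⟨v, rfl, fun u hu => (h u hu).elim⟩⟩
  rintro ⟨_, rfl, h⟩ u hu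
  exact hu.ne (h u hu).symm

lemma isStallerWin_pair (hne : y ≠ v) :
    IsStallerWin G {y, v} ↔ G.neighborSet y ⊆ {v} ∨ G.neighborSet v ⊆ {y} := by
  refine ⟨?_, ?_⟩
  · rintro ⟨z, rfl | rfl, h⟩
    · exact Or.inl fun u hu => (h u hu).resolve_left hu.ne.symm
    · exact Or.inr fun u hu => ((h u hu).resolve_right hu.ne.symm : u = y)
  · rintro (h | h)
    · exact ⟨y, .inl rfl, fun u hu => .inr (h hu)⟩
    · exact ⟨v, .inr rfl, fun u hu => .inl (h hu)⟩

lemma sWin_succ (k : ℕ) : SWin G k D S → SWin G (k + 1) D S := by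
  induction k generalizing D S with
  | zero => exact Or.inl
  | succ k ih =>
    rintro (h | ⟨v, hv, h | ⟨hw, h⟩⟩)
    exacts [Or.inl h, Or.inr ⟨v, hv, Or.inl h⟩,
      Or.inr ⟨v, hv, Or.inr ⟨hw, fun w hw => ih (h w hw)⟩⟩]

lemma sWin_mono {j k : ℕ} (hjk : j ≤ k) (h : SWin G j D S) : SWin G k D S := by
  induction hjk with
  | refl => exact h
  | step _ ih => exact sWin_succ _ ih

lemma sWin_one_iff :
    SWin G 1 D S ↔ IsStallerWin G S ∨ ∃ v ∉ D ∪ S, IsStallerWin G (insert v S) := by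
  refine or_congr Iff.rfl (exists_congr fun v => and_congr_right fun _ => ?_)
  refine ⟨?_, Or.inl⟩
  rintro (h | ⟨⟨w, hw⟩, h⟩)
  exacts [h, h w hw]

lemma sWin_two_empty_iff_exists_two_threats : SWin G 2 ∅ ∅ ↔ ∃ v, G.IsIsolated v ∨
    ∃ y₁ y₂, y₁ ≠ y₂ ∧ y₁ ≠ v ∧ y₂ ≠ v ∧ IsStallerWin G {y₁, v} ∧ IsStallerWin G {y₂, v} := by
  rw [SWin.eq_2]
  simp only [sWin_one_iff, insert_empty_eq, Set.empty_union, Set.union_singleton,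
    Set.mem_singleton_iff, Set.mem_insert_iff, not_or, not_isStallerWin_empty, false_or,
    Set.mem_empty_iff_false, not_false_eq_true, true_and, isStallerWin_singleton]
  refine exists_congr fun v => ?_
  by_cases hv : G.IsIsolated v
  · simp only [hv, true_or]
  simp only [hv, false_or]
  refine ⟨?_, ?_⟩
  · rintro ⟨⟨w, hw⟩, h⟩
    obtain ⟨y₁, ⟨hy₁, -⟩, t₁⟩ := h w hw
    obtain ⟨y₂, ⟨hy₂, hy₂₁⟩, t₂⟩ := h y₁ hy₁
    exact ⟨y₁, y₂, Ne.symm hy₂₁, hy₁, hy₂, t₁, t₂⟩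
  · rintro ⟨y₁, y₂, h₁₂, hy₁, hy₂, t₁, t₂⟩
    refine ⟨⟨y₁, hy₁⟩, fun w _ => ?_⟩
    by_cases hw : y₁ = w
    · exact ⟨y₂, ⟨hy₂, hw ▸ h₁₂.symm⟩, t₂⟩
    · exact ⟨y₁, ⟨hy₁, hw⟩, t₁⟩

lemma sWin_one_empty_iff : SWin G 1 ∅ ∅ ↔ ∃ v, G.IsIsolated v := by
  simp [sWin_one_iff, not_isStallerWin_empty, insert_empty_eq, isStallerWin_singleton]

/-- Were `N(v) = {y₁}`, the threat `{y₂, v}` would make `v` adjacent to `y₂` as well. -/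
lemma hasPendantPair_iff_of_forall_not_isIsolated (hG : ∀ x, ¬ G.IsIsolated x) :
    G.HasPendantPair ↔ ∃ v y₁ y₂, y₁ ≠ y₂ ∧ y₁ ≠ v ∧ y₂ ≠ v ∧
      IsStallerWin G {y₁, v} ∧ IsStallerWin G {y₂, v} := by
  have hT : ∀ {y v}, y ≠ v →
      (IsStallerWin G {y, v} ↔ G.neighborSet y = {v} ∨ G.neighborSet v = {y}) := by
    intro y v hne
    rw [isStallerWin_pair hne, (G.neighborSet_nonempty.mpr (hG y)).subset_singleton_iff,
      (G.neighborSet_nonempty.mpr (hG v)).subset_singleton_iff]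
  refine ⟨?_, ?_⟩
  · rintro ⟨v, p₁, p₂, hne, h₁, h₂⟩
    have hv₁ : p₁ ≠ v := ((adj_iff_of_neighborSet_eq h₁).mpr rfl).ne
    have hv₂ : p₂ ≠ v := ((adj_iff_of_neighborSet_eq h₂).mpr rfl).ne
    exact ⟨v, p₁, p₂, hne, hv₁, hv₂, (hT hv₁).mpr (Or.inl h₁), (hT hv₂).mpr (Or.inl h₂)⟩
  · rintro ⟨v, y₁, y₂, hne, hv₁, hv₂, t₁, t₂⟩
    rw [hT hv₁] at t₁
    rw [hT hv₂] at t₂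
    have key : ∀ {a b}, a ≠ b → G.neighborSet b = {v} ∨ G.neighborSet v = {b} →
        G.neighborSet v ≠ {a} := by
      rintro a b hab (hb | hb) ha
      · have hvb : G.Adj v b := ((adj_iff_of_neighborSet_eq hb).mpr rfl).symm
        exact hab ((adj_iff_of_neighborSet_eq ha).mp hvb).symm
      · exact hab (Set.singleton_injective (ha.symm.trans hb))
    exact ⟨v, y₁, y₂, hne, t₁.resolve_right (key hne t₂), t₂.resolve_right (key hne.symm t₁)⟩

lemma sWin_two_empty_iff : SWin G 2 ∅ ∅ ↔ (∃ v, G.IsIsolated v) ∨ G.HasPendantPair := by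
  by_cases hiso : ∃ v, G.IsIsolated v
  · obtain ⟨v, hv⟩ := hiso
    exact iff_of_true (sWin_two_empty_iff_exists_two_threats.mpr ⟨v, Or.inl hv⟩) (Or.inl ⟨v, hv⟩)
  rw [not_exists] at hiso
  rw [sWin_two_empty_iff_exists_two_threats, hasPendantPair_iff_of_forall_not_isIsolated hiso]
  simp only [hiso, false_or, exists_false]

lemma gammaSMB'_le_iff {k : ℕ} : gammaSMB' G ≤ k ↔ SWin G k ∅ ∅ := by
  refine ⟨fun h => ?_, fun h => sInf_le ⟨k, h, rfl⟩⟩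
  by_contra hk
  have : ((k + 1 : ℕ) : ℕ∞) ≤ gammaSMB' G := by
    refine le_sInf ?_
    rintro _ ⟨j, hj, rfl⟩
    exact_mod_cast lt_of_not_ge fun hjk => hk (sWin_mono hjk hj)
  have := this.trans h
  norm_cast at this
  omega

lemma gammaSMB'_eq_two_iff : gammaSMB' G = 2 ↔ (∀ v, ¬ G.IsIsolated v) ∧ G.HasPendantPair := by
  have : gammaSMB' G = 2 ↔ gammaSMB' G ≤ (2 : ℕ) ∧ ¬ gammaSMB' G ≤ (1 : ℕ) := by
    induction gammaSMB' G using ENat.recTopCoe with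
    | top => simp
    | coe a => norm_cast; omega
  rw [this, gammaSMB'_le_iff, gammaSMB'_le_iff, sWin_two_empty_iff, sWin_one_empty_iff,
    not_exists]
  tauto

lemma two_lt_gammaSMB'_iff : 2 < gammaSMB' G ↔ (∀ v, ¬ G.IsIsolated v) ∧ ¬ G.HasPendantPair := by
  rw [← not_le, show (2 : ℕ∞) = (2 : ℕ) from rfl, gammaSMB'_le_iff, sWin_two_empty_iff, not_or,
    not_exists]

end MBD

/-- A (finite) graph `G` is `2`-`γ'_SMB`-critical if and only if `G` is isomorphic to `G_n'`
for some `n ≥ 1`. -/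
theorem two_gammaSMB'_critical_iff {V : Type*} [Fintype V] (G : SimpleGraph V) :
    (gammaSMB' G = 2 ∧ ∀ u v : V, u ≠ v → ¬ G.Adj u v →
        gammaSMB' G < gammaSMB' (G ⊔ SimpleGraph.fromEdgeSet {s(u, v)})) ↔
      ∃ n : ℕ, 1 ≤ n ∧ Nonempty (G ≃g GnPrime n) := by
  constructor
  · rintro ⟨h2, hcrit⟩
    obtain ⟨-, v, p₁, p₂, hp⟩ := gammaSMB'_eq_two_iff.mp h2
    refine IsCliqueWithPendantPair.exists_iso_gnPrime ⟨hp, fun a ha b hb hab => ?_⟩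
    by_contra hnadj
    have hlt := hcrit a b hab hnadj
    rw [h2, two_lt_gammaSMB'_iff] at hlt
    exact hlt.2 ⟨v, p₁, p₂, hp.sup_edge ha hb⟩
  · rintro ⟨n, hn, ⟨φ⟩⟩
    have hG := (isCliqueWithPendantPair_gnPrime hn).comap φ
    have h2 : gammaSMB' G = 2 := gammaSMB'_eq_two_iff.mpr ⟨hG.not_isIsolated, _, _, _, hG.1⟩
    refine ⟨h2, fun u w hne hnadj => ?_⟩
    rw [h2, two_lt_gammaSMB'_iff]
    exact ⟨fun x hx => hG.not_isIsolated x fun y hy => hx y (Or.inl hy),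
      hG.not_hasPendantPair_sup_edge hne hnadj⟩
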